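/- arXiv:2112.03147 — 6 statements merged into one kernel-verified Lean document; each statement's English description precedes it below -/
import Mathlib

section
/- Let S be a symmetric numerical semigroup with δ gaps w_1 < ... < w_δ and associated partition λ_i = w_{δ+1-i} - (δ-i). Then λ is self-conjugate (symmetric): λ equals its transpose partition. -/
/-- The partition associated to a symmetric numerical semigroup is
self-conjugate: `λ'_j = #{i : λ_i ≥ j}` equals `λ_j` for all `j`. -/
theorem stmt_2 (S : Set ℕ) (h0 : 0 ∈ S)
    (hadd : ∀ a ∈ S, ∀ b ∈ S, a + b ∈ S)
    (hfin : Sᶜ.Finite) (δ : ℕ) (hδ : δ = hfin.toFinset.card)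
    (hsym : ∀ w : ℕ, (w ∉ S ↔ (2 * (δ : ℤ) - 1 - w) ∈ ((fun k : ℕ => (k : ℤ)) '' S)))
    (w : Fin δ → ℕ) (hmono : StrictMono w) (hrange : Set.range w = Sᶜ)
    (lam : Fin δ → ℕ)
    (hlam : ∀ i : Fin δ, lam i = w i.rev - ((δ - 1) - (i : ℕ))) :
    ∀ j : Fin δ,
      (Finset.univ.filter fun i : Fin δ => (j : ℕ) + 1 ≤ lam i).card = lam j := by
  classical
  intro j
  have hδpos : 0 < δ := j.pos
  -- every gap is a value of w, and values of w are gaps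
  have hgapmem : ∀ k : Fin δ, w k ∉ S := by
    intro k
    have : w k ∈ Sᶜ := hrange ▸ Set.mem_range_self k
    exact this
  have hgap_of_not : ∀ m : ℕ, m ∉ S → ∃ k : Fin δ, w k = m := by
    intro m hm
    have : m ∈ Set.range w := by rw [hrange]; exact hm
    exact this
  -- gaps are < 2δ
  have hgap_lt : ∀ k : Fin δ, w k < 2 * δ := by
    intro k
    obtain ⟨s, _, hseq⟩ := (hsym (w k)).mp (hgapmem k)
    simp only at hseq
    omega
  -- ℕ version of symmetry
  have hsymN : ∀ m : ℕ, m < 2 * δ → (m ∉ S ↔ (2 * δ - 1 - m) ∈ S) := by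
    intro m hm
    rw [hsym m]
    constructor
    · rintro ⟨s, hs, hseq⟩
      simp only at hseq
      have : s = 2 * δ - 1 - m := by omega
      rwa [← this]
    · intro h
      exact ⟨_, h, by simp only; push_cast; omega⟩
  -- counting functions
  set Nf : ℕ → ℕ := fun m => ((Finset.range m).filter (· ∈ S)).card with hNfdef
  set Gf : ℕ → ℕ := fun m => ((Finset.range m).filter (· ∉ S)).card with hGfdef
  have hNG : ∀ m, Nf m + Gf m = m := by
    intro m
    have := Finset.card_filter_add_card_filter_not
      (s := Finset.range m) (p := (· ∈ S))
    simpa [hNfdef, hGfdef] using this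
  -- gap-count below c equals count of indices with w k < c
  have hGcard : ∀ c : ℕ, Gf c = (Finset.univ.filter fun k : Fin δ => w k < c).card := by
    intro c
    have himg : (Finset.range c).filter (· ∉ S)
        = (Finset.univ.filter fun k : Fin δ => w k < c).image w := by
      ext m
      simp only [Finset.mem_filter, Finset.mem_range, Finset.mem_image, Finset.mem_univ,
        true_and]
      constructor
      · rintro ⟨hlt, hns⟩
        obtain ⟨k, hk⟩ := hgap_of_not m hns
        exact ⟨k, hk ▸ hlt, hk⟩
      · rintro ⟨k, hlt, rfl⟩
        exact ⟨hlt, hgapmem k⟩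
    rw [hGfdef]
    simp only
    rw [himg, Finset.card_image_of_injective _ hmono.injective]
  -- Gf at a gap value
  have hGw : ∀ k : Fin δ, Gf (w k) = (k : ℕ) := by
    intro k
    rw [hGcard]
    have : (Finset.univ.filter fun t : Fin δ => w t < w k) = Finset.Iio k := by
      ext t
      simp only [Finset.mem_filter, Finset.mem_univ, true_and, Finset.mem_Iio]
      exact hmono.lt_iff_lt
    rw [this, Fin.card_Iio]
  -- Gf c ≤ i ↔ c ≤ w i
  have hGle : ∀ (c : ℕ) (i : Fin δ), Gf c ≤ (i : ℕ) ↔ c ≤ w i := by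
    intro c i
    rw [hGcard]
    constructor
    · intro h
      by_contra hc
      push_neg at hc
      have hsub : Finset.Iic i ⊆ Finset.univ.filter fun k : Fin δ => w k < c := by
        intro t ht
        simp only [Finset.mem_Iic] at ht
        simp only [Finset.mem_filter, Finset.mem_univ, true_and]
        exact lt_of_le_of_lt (hmono.monotone ht) hc
      have := Finset.card_le_card hsub
      rw [Fin.card_Iic] at this
      omega
    · intro h
      have hsub : (Finset.univ.filter fun k : Fin δ => w k < c) ⊆ Finset.Iio i := by
        intro t ht
        simp only [Finset.mem_filter, Finset.mem_univ, true_and] at ht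
        simp only [Finset.mem_Iio]
        rw [← hmono.lt_iff_lt]
        exact lt_of_lt_of_le ht h
      have := Finset.card_le_card hsub
      rwa [Fin.card_Iio] at this
  -- total number of gaps
  have hGtot : Gf (2 * δ) = δ := by
    have htf : hfin.toFinset = (Finset.range (2 * δ)).filter (· ∉ S) := by
      ext x
      simp only [Set.Finite.mem_toFinset, Set.mem_compl_iff, Finset.mem_filter,
        Finset.mem_range]
      constructor
      · intro hx
        obtain ⟨k, hk⟩ := hgap_of_not x hx
        exact ⟨hk ▸ hgap_lt k, hx⟩
      · exact fun h => h.2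
    rw [hGfdef]
    simp only
    rw [← htf, ← hδ]
  -- symmetry of counts: Nf m + Gf (2δ - m) = δ for m ≤ 2δ
  have hNGsym : ∀ m : ℕ, m ≤ 2 * δ → Nf m + Gf (2 * δ - m) = δ := by
    intro m hm
    have hsubset : (Finset.range (2 * δ - m)).filter (· ∉ S)
        ⊆ (Finset.range (2 * δ)).filter (· ∉ S) := by
      apply Finset.filter_subset_filter
      exact Finset.range_subset_range.mpr (by omega)
    have hcard : Nf m = ((Finset.range (2 * δ)).filter (· ∉ S)
        \ (Finset.range (2 * δ - m)).filter (· ∉ S)).card := by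
      rw [hNfdef]
      simp only
      apply Finset.card_bij (fun x _ => 2 * δ - 1 - x)
      · intro x hx
        simp only [Finset.mem_filter, Finset.mem_range] at hx
        obtain ⟨hxm, hxS⟩ := hx
        have hxlt : x < 2 * δ := lt_of_lt_of_le hxm hm
        have hy : 2 * δ - 1 - x ∉ S := by
          rw [hsymN (2 * δ - 1 - x) (by omega)]
          have : 2 * δ - 1 - (2 * δ - 1 - x) = x := by omega
          rwa [this]
        simp only [Finset.mem_sdiff, Finset.mem_filter, Finset.mem_range]
        refine ⟨⟨by omega, hy⟩, ?_⟩
        intro hcon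
        obtain ⟨hlt, _⟩ := hcon
        omega
      · intro x hx y hy hxy
        simp only [Finset.mem_filter, Finset.mem_range] at hx hy
        omega
      · intro y hy
        simp only [Finset.mem_sdiff, Finset.mem_filter, Finset.mem_range] at hy
        obtain ⟨⟨hylt, hyS⟩, hnot⟩ := hy
        have hyge : 2 * δ - m ≤ y := by
          by_contra hc
          exact hnot ⟨by omega, hyS⟩
        refine ⟨2 * δ - 1 - y, ?_, by omega⟩
        simp only [Finset.mem_filter, Finset.mem_range]
        constructor
        · omega
        · by_contra hc
          rw [hsymN (2 * δ - 1 - y) (by omega)] at hc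
          have : 2 * δ - 1 - (2 * δ - 1 - y) = y := by omega
          rw [this] at hc
          exact hyS hc
    rw [hcard, Finset.card_sdiff_of_subset hsubset]
    have h1 : ((Finset.range (2 * δ)).filter (· ∉ S)).card = Gf (2 * δ) := rfl
    have h2 : ((Finset.range (2 * δ - m)).filter (· ∉ S)).card = Gf (2 * δ - m) := rfl
    have h3 : Gf (2 * δ - m) ≤ Gf (2 * δ) := Finset.card_le_card hsubset
    rw [h1, h2, hGtot]
    rw [hGtot] at h3
    omega
  -- reindex the filter by Fin.rev
  have hrev : (Finset.univ.filter fun i : Fin δ => (j : ℕ) + 1 ≤ lam i)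
      = (Finset.univ.filter fun k : Fin δ => (j : ℕ) + 1 ≤ lam k.rev).image Fin.rev := by
    ext i
    simp only [Finset.mem_filter, Finset.mem_univ, true_and, Finset.mem_image]
    constructor
    · intro h
      exact ⟨i.rev, by simpa [Fin.rev_rev] using h, Fin.rev_rev i⟩
    · rintro ⟨k, hk, rfl⟩
      exact hk
  -- the key pointwise equivalence
  have hkey : ∀ k : Fin δ, ((j : ℕ) + 1 ≤ lam k.rev ↔ ¬ (w k < 2 * δ - w j.rev)) := by
    intro k
    have h1 : lam k.rev = w k - (k : ℕ) := by
      rw [hlam k.rev, Fin.rev_rev]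
      have : (k.rev : ℕ) = δ - 1 - (k : ℕ) := by
        have := k.isLt
        simp [Fin.val_rev]
        omega
      rw [this]
      congr 1
      have := k.isLt
      omega
    rw [h1]
    have hk2 : Nf (w k) + (k : ℕ) = w k := by
      have := hNG (w k); rw [hGw k] at this; omega
    have hk3 : Nf (w k) + Gf (2 * δ - w k) = δ := hNGsym (w k) (le_of_lt (hgap_lt k))
    have hk4 : Gf (2 * δ - w k) ≤ (j.rev : ℕ) ↔ 2 * δ - w k ≤ w j.rev :=
      hGle (2 * δ - w k) j.rev
    have hjrev : (j.rev : ℕ) = δ - 1 - (j : ℕ) := by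
      have := j.isLt
      simp [Fin.val_rev]
      omega
    rw [hjrev] at hk4
    have hj := j.isLt
    have hwk := hgap_lt k
    have hwj := hgap_lt j.rev
    constructor
    · intro h
      have hN : (j : ℕ) + 1 ≤ Nf (w k) := by omega
      have : Gf (2 * δ - w k) ≤ δ - 1 - (j : ℕ) := by omega
      have := hk4.mp this
      omega
    · intro h
      have : 2 * δ - w k ≤ w j.rev := by omega
      have := hk4.mpr this
      omega
  rw [hrev, Finset.card_image_of_injective _ Fin.rev_injective]
  have hfeq : (Finset.univ.filter fun k : Fin δ => (j : ℕ) + 1 ≤ lam k.rev)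
      = Finset.univ.filter fun k : Fin δ => ¬ (w k < 2 * δ - w j.rev) := by
    apply Finset.filter_congr
    intro k _
    simpa using hkey k
  rw [hfeq]
  -- count the complement
  have hcompl := Finset.card_filter_add_card_filter_not
    (s := (Finset.univ : Finset (Fin δ))) (p := fun k : Fin δ => w k < 2 * δ - w j.rev)
  rw [Finset.card_univ, Fintype.card_fin] at hcompl
  have hGc : (Finset.univ.filter fun k : Fin δ => w k < 2 * δ - w j.rev).card
      = Gf (2 * δ - w j.rev) := (hGcard _).symm
  have hNj : Nf (w j.rev) + Gf (2 * δ - w j.rev) = δ :=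
    hNGsym (w j.rev) (le_of_lt (hgap_lt j.rev))
  have hNjval : Nf (w j.rev) = lam j := by
    have h1 := hNG (w j.rev)
    rw [hGw j.rev] at h1
    rw [hlam j]
    have hjrev : (j.rev : ℕ) = δ - 1 - (j : ℕ) := by
      have := j.isLt
      simp [Fin.val_rev]
      omega
    have := j.isLt
    omega
  omega
end

section
/- Let S be a symmetric numerical semigroup with δ gaps and associated partition λ. Then λ is contained in the staircase partition (δ, δ-1, ..., 2, 1), i.e. λ_i ≤ δ + 1 - i for all i = 1,...,δ. -/
/-!
In a numerical semigroup `S` the `j`-th gap `g` (counting from `0`) is at most `2 j + 1`: the map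
`s ↦ g - s` sends the elements of `S` below `g` injectively to gaps below `g`, so at least half of
`0, …, g` are gaps, and only `j + 1` of them are. Since `λ_i = w_{δ-1-i} - (δ-1-i)`, this gives
`λ_i ≤ δ - i`.
-/

open Finset

section GapBound

variable {S : Set ℕ} [DecidablePred (· ∈ S)]

theorem card_filter_mem_le_card_filter_notMem (hadd : ∀ a ∈ S, ∀ b ∈ S, a + b ∈ S)
    {g : ℕ} (hg : g ∉ S) :
    #{x ∈ range (g + 1) | x ∈ S} ≤ #{x ∈ range (g + 1) | x ∉ S} := by
  refine card_le_card_of_injOn (g - ·) (fun s hs ↦ ?_) (fun s hs t ht hst ↦ ?_)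
  · simp only [coe_filter, mem_range, Set.mem_ofPred_eq] at hs ⊢
    refine ⟨by omega, fun hgs ↦ hg ?_⟩
    simpa [Nat.add_sub_cancel' (Nat.lt_succ_iff.mp hs.1)] using hadd s hs.2 (g - s) hgs
  · simp only [coe_filter, mem_range, Set.mem_ofPred_eq] at hs ht hst
    omega

theorem card_filter_notMem_le_of_strictMono {n : ℕ} {w : Fin n → ℕ} (hmono : StrictMono w)
    (hrange : Set.range w = Sᶜ) (j : Fin n) :
    #{x ∈ range (w j + 1) | x ∉ S} ≤ j + 1 := by
  calc #{x ∈ range (w j + 1) | x ∉ S}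
      ≤ #((Iic j).image w) := card_le_card fun x hx ↦ by
        simp only [mem_filter, mem_range] at hx
        obtain ⟨k, rfl⟩ : x ∈ Set.range w := hrange ▸ hx.2
        exact mem_image_of_mem w (mem_Iic.mpr (hmono.le_iff_le.mp (by omega)))
    _ ≤ #(Iic j) := card_image_le
    _ = j + 1 := Fin.card_Iic j

theorem le_two_mul_add_one_of_strictMono (hadd : ∀ a ∈ S, ∀ b ∈ S, a + b ∈ S) {n : ℕ}
    {w : Fin n → ℕ} (hmono : StrictMono w) (hrange : Set.range w = Sᶜ) (j : Fin n) :
    w j ≤ 2 * j + 1 := by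
  have hgap : w j ∉ S := (hrange ▸ Set.mem_range_self j : w j ∈ Sᶜ)
  have hsplit := card_filter_add_card_filter_not (s := range (w j + 1)) (· ∈ S)
  rw [card_range] at hsplit
  have := card_filter_mem_le_card_filter_notMem hadd hgap
  have := card_filter_notMem_le_of_strictMono hmono hrange j
  omega

end GapBound

theorem stmt_3_general (S : Set ℕ)
    (hadd : ∀ a ∈ S, ∀ b ∈ S, a + b ∈ S)
    (δ : ℕ)
    (w : Fin δ → ℕ) (hmono : StrictMono w) (hrange : Set.range w = Sᶜ)
    (lam : Fin δ → ℕ)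
    (hlam : ∀ i : Fin δ, lam i = w i.rev - ((δ - 1) - (i : ℕ))) :
    ∀ i : Fin δ, lam i ≤ δ - (i : ℕ) := by
  classical
  intro i
  have hgap := le_two_mul_add_one_of_strictMono hadd hmono hrange i.rev
  rw [Fin.val_rev] at hgap
  rw [hlam i]
  omega

/-- The partition associated to a symmetric numerical semigroup with
`δ` gaps is contained in the staircase `(δ, δ-1, …, 1)`: `λ_i ≤ δ + 1 - i`
(0-based: `lam i ≤ δ - i`). -/
theorem stmt_3 (S : Set ℕ) (h0 : 0 ∈ S)
    (hadd : ∀ a ∈ S, ∀ b ∈ S, a + b ∈ S)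
    (hfin : Sᶜ.Finite) (δ : ℕ) (hδ : δ = hfin.toFinset.card)
    (hsym : ∀ w : ℕ, (w ∉ S ↔ (2 * (δ : ℤ) - 1 - w) ∈ ((fun k : ℕ => (k : ℤ)) '' S)))
    (w : Fin δ → ℕ) (hmono : StrictMono w) (hrange : Set.range w = Sᶜ)
    (lam : Fin δ → ℕ)
    (hlam : ∀ i : Fin δ, lam i = w i.rev - ((δ - 1) - (i : ℕ))) :
    ∀ i : Fin δ, lam i ≤ δ - (i : ℕ) :=
  stmt_3_general S hadd δ w hmono hrange lam hlam
end

section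
/- Let S be a symmetric numerical semigroup with δ gaps and associated partition λ. Then |λ| = Σ_i λ_i ≤ δ(δ+1)/2, with equality if and only if S = ⟨2, 2δ+1⟩, the numerical semigroup generated by 2 and 2δ+1. -/
/-!
If `n` is a gap of an additively closed `S ⊆ ℕ`, then for every `a ≤ n / 2` one of `a`, `n - a`
is a gap, so at least `n / 2 + 1` gaps are `≤ n`. Hence the `j`-th gap (counting from `0`) is at
most `2j + 1`, which gives `λᵢ ≤ δ - i` termwise and `|λ| ≤ δ + ⋯ + 1`. Equality forces the gaps
to be exactly `1, 3, …, 2δ - 1`, i.e. `S = ⟨2, 2δ + 1⟩`.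
-/

open Finset

theorem sum_fin_sub_eq (δ : ℕ) : ∑ i : Fin δ, (δ - (i : ℕ)) = δ * (δ + 1) / 2 := by
  have gauss := sum_range_succ' (fun i => i) δ
  rw [sum_range_id, Nat.add_sub_cancel, Nat.mul_comm, add_zero] at gauss
  rw [Fin.sum_univ_eq_sum_range (δ - ·), ← sum_range_reflect, gauss]
  exact sum_congr rfl fun j hj => by rw [mem_range] at hj; omega

theorem half_add_one_le_ncard_gaps {S : Set ℕ} (hadd : ∀ a ∈ S, ∀ b ∈ S, a + b ∈ S) {n : ℕ}
    (hn : n ∉ S) : n / 2 + 1 ≤ (Set.Iic n \ S).ncard := by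
  classical
  have key := Set.ncard_le_ncard_of_injOn (s := Set.Iic (n / 2)) (t := Set.Iic n \ S)
    (fun a => if a ∈ S then n - a else a) ?_ ?_ (Set.finite_Iic n).sdiff
  · simpa using key
  · intro a ha
    have han : a ≤ n := (Set.mem_Iic.1 ha).trans (Nat.div_le_self n 2)
    split_ifs with haS
    · refine ⟨Set.mem_Iic.2 (Nat.sub_le n a), fun h => hn ?_⟩
      simpa [han] using hadd a haS _ h
    · exact ⟨Set.mem_Iic.2 han, haS⟩
  · intro a ha b hb hab
    simp only [Set.mem_Iic] at ha hb
    by_cases haS : a ∈ S <;> by_cases hbS : b ∈ S <;>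
      simp only [haS, hbS, if_true, if_false] at hab
    · omega
    · exact absurd (show a = b by omega) fun h => hbS (h ▸ haS)
    · exact absurd (show a = b by omega) fun h => haS (h ▸ hbS)
    · exact hab

theorem le_two_mul_add_one_of_range_eq_compl {S : Set ℕ}
    (hadd : ∀ a ∈ S, ∀ b ∈ S, a + b ∈ S) {δ : ℕ} {w : Fin δ → ℕ} (hmono : StrictMono w)
    (hrange : Set.range w = Sᶜ) (j : Fin δ) : w j ≤ 2 * j + 1 := by
  have hgaps : Set.Iic (w j) \ S = w '' Set.Iic j := by
    ext x
    constructor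
    · rintro ⟨hx, hxS⟩
      obtain ⟨i, rfl⟩ : x ∈ Set.range w := hrange ▸ hxS
      exact ⟨i, hmono.le_iff_le.1 hx, rfl⟩
    · rintro ⟨i, hi, rfl⟩
      exact ⟨hmono.monotone hi, (hrange ▸ Set.mem_range_self i : w i ∈ Sᶜ)⟩
  have hcard : (Set.Iic (w j) \ S).ncard = j + 1 := by
    rw [hgaps, Set.ncard_image_of_injective _ hmono.injective, ← coe_Iic,
      Set.ncard_coe_finset, Fin.card_Iic]
  have := half_add_one_le_ncard_gaps hadd (hrange ▸ Set.mem_range_self j : w j ∈ Sᶜ)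
  omega

theorem compl_closure_two_two_mul_add_one (δ : ℕ) :
    {m : ℕ | ∃ a b : ℕ, m = 2 * a + (2 * δ + 1) * b}ᶜ = {n : ℕ | n % 2 = 1 ∧ n < 2 * δ} := by
  ext n
  simp only [Set.mem_compl_iff, Set.mem_ofPred_eq, not_exists]
  constructor
  · intro h
    by_contra! hn
    rcases Nat.mod_two_eq_zero_or_one n with hpar | hpar
    · exact h (n / 2) 0 (by omega)
    · exact h ((n - (2 * δ + 1)) / 2) 1 (by have := hn hpar; omega)
  · rintro ⟨hodd, hlt⟩ a (_ | b) heq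
    · omega
    · nlinarith

theorem range_fin_two_mul_add_one (δ : ℕ) :
    Set.range (fun j : Fin δ => 2 * (j : ℕ) + 1) = {n : ℕ | n % 2 = 1 ∧ n < 2 * δ} := by
  ext n
  constructor
  · rintro ⟨j, rfl⟩
    exact ⟨by simp, by simp only; omega⟩
  · rintro ⟨hodd, hlt⟩
    exact ⟨⟨n / 2, by omega⟩, by simp only; omega⟩

theorem stmt_4_general (S : Set ℕ)
    (hadd : ∀ a ∈ S, ∀ b ∈ S, a + b ∈ S)
    (δ : ℕ)
    (w : Fin δ → ℕ) (hmono : StrictMono w) (hrange : Set.range w = Sᶜ)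
    (lam : Fin δ → ℕ)
    (hlam : ∀ i : Fin δ, lam i = w i.rev - ((δ - 1) - (i : ℕ))) :
    (∑ i : Fin δ, lam i) ≤ δ * (δ + 1) / 2 ∧
      ((∑ i : Fin δ, lam i) = δ * (δ + 1) / 2 ↔
        S = {m : ℕ | ∃ a b : ℕ, m = 2 * a + (2 * δ + 1) * b}) := by
  have hgap := le_two_mul_add_one_of_range_eq_compl hadd hmono hrange
  have hbound (i : Fin δ) : lam i ≤ δ - i := by
    have := hgap i.rev
    rw [hlam, Fin.val_rev] at *
    omega
  have hlam_eq_iff (i : Fin δ) : lam i = δ - i ↔ w i.rev = 2 * i.rev + 1 := by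
    have := i.isLt
    rw [hlam, Fin.val_rev]
    omega
  have hmono_odd : StrictMono fun j : Fin δ => 2 * (j : ℕ) + 1 := fun a b hab => by
    simp only [Fin.lt_def] at hab ⊢; omega
  refine ⟨sum_fin_sub_eq δ ▸ sum_le_sum fun i _ => hbound i, ?_⟩
  rw [← sum_fin_sub_eq, sum_eq_sum_iff_of_le fun i _ => hbound i]
  calc (∀ i ∈ univ, lam i = δ - i) ↔ w = fun j : Fin δ => 2 * (j : ℕ) + 1 := by
        refine ⟨fun h => funext fun j => ?_, fun h i _ => (hlam_eq_iff i).2 (congrFun h _)⟩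
        simpa using (hlam_eq_iff j.rev).1 (h _ (mem_univ _))
    _ ↔ S = {m : ℕ | ∃ a b : ℕ, m = 2 * a + (2 * δ + 1) * b} := by
        rw [← hmono.range_inj hmono_odd, hrange, range_fin_two_mul_add_one,
          ← compl_closure_two_two_mul_add_one, compl_inj_iff]

/-- For the partition `λ` of a symmetric numerical semigroup with `δ` gaps,
`|λ| ≤ δ(δ+1)/2`, with equality iff `S = ⟨2, 2δ+1⟩`. -/
theorem stmt_4 (S : Set ℕ) (h0 : 0 ∈ S)
    (hadd : ∀ a ∈ S, ∀ b ∈ S, a + b ∈ S)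
    (hfin : Sᶜ.Finite) (δ : ℕ) (hδ : δ = hfin.toFinset.card)
    (hsym : ∀ w : ℕ, (w ∉ S ↔ (2 * (δ : ℤ) - 1 - w) ∈ ((fun k : ℕ => (k : ℤ)) '' S)))
    (w : Fin δ → ℕ) (hmono : StrictMono w) (hrange : Set.range w = Sᶜ)
    (lam : Fin δ → ℕ)
    (hlam : ∀ i : Fin δ, lam i = w i.rev - ((δ - 1) - (i : ℕ))) :
    (∑ i : Fin δ, lam i) ≤ δ * (δ + 1) / 2 ∧
      ((∑ i : Fin δ, lam i) = δ * (δ + 1) / 2 ↔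
        S = {m : ℕ | ∃ a b : ℕ, m = 2 * a + (2 * δ + 1) * b}) :=
  stmt_4_general S hadd δ w hmono hrange lam hlam
end

section
/- Under the substitution x_i = p_i(u_1,...,u_n)/i, where p_i = u_1^i + ... + u_n^i is the i-th power sum in n variables, the Schur-Weierstrass polynomial σ_λ satisfies σ_λ(p_1, p_2/2, p_3/3, ...) = s_λ(u_1, ..., u_n), the ordinary Schur polynomial in u_1,...,u_n. -/
/-!
Under `x_i ↦ p_i / i` the series `Σ x_i t^i` becomes `P = Σ_i p_i t^i / i = -Σ_j log (1 - u_j t)`,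
so `exp P` should be `H = ∏_j 1 / (1 - u_j t) = Σ_k h_k t^k`. Both `exp P` and `H` solve
`Y' = Y P'` with `Y(0) = 1`, and that solution is unique because `exp (-P)` is an integrating
factor: `(Y exp (-P))' = 0`. Hence `σ_k ↦ h_k` for every `k`, and the determinant `σ_λ` of the
`σ_{λ_i+j-i}` maps to the Jacobi–Trudi determinant of the `h_{λ_i+j-i}`, which is `s_λ`.
-/

open MvPolynomial in
/-- The generating series `Σ_{i≥1} x_i t^i` with coefficients in `ℚ[x_1, x_2, …]`. -/
noncomputable def swGen : PowerSeries (MvPolynomial ℕ ℚ) :=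
  PowerSeries.mk fun i => if i = 0 then 0 else MvPolynomial.X i

/-- The elementary Schur–Weierstrass polynomial `σ_k`, i.e. the coefficient of `t^k`
in `exp (Σ_{i≥1} x_i t^i) = Σ_m (Σ x_i t^i)^m / m!` (the terms with `m > k` do not
contribute to the coefficient of `t^k`). -/
noncomputable def sw (k : ℕ) : MvPolynomial ℕ ℚ :=
  ∑ m ∈ Finset.range (k + 1),
    (Nat.factorial m : ℚ)⁻¹ • PowerSeries.coeff (R := MvPolynomial ℕ ℚ) k (swGen ^ m)

/-- `σ_k` for integer index, with `σ_k = 0` for `k < 0`. -/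
noncomputable def swZ (k : ℤ) : MvPolynomial ℕ ℚ :=
  if 0 ≤ k then sw k.toNat else 0

/-- The Schur–Weierstrass polynomial `σ_λ = det (σ_{λ_i + j - i})_{1 ≤ i,j ≤ m}`. -/
noncomputable def swSchur {m : ℕ} (lam : Fin m → ℕ) : MvPolynomial ℕ ℚ :=
  Matrix.det (Matrix.of fun i j : Fin m => swZ ((lam i : ℤ) + (j : ℕ) - (i : ℕ)))

/-- Substitution `x_i ↦ p_i(u_1,…,u_n)/i`, where `p_i` is the `i`-th power sum. -/
noncomputable def powerSub (n : ℕ) : MvPolynomial ℕ ℚ →ₐ[ℚ] MvPolynomial (Fin n) ℚ :=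
  MvPolynomial.aeval fun i : ℕ => ((i : ℚ))⁻¹ • MvPolynomial.psum (Fin n) ℚ i

/-- `h_k` for integer index, with `h_k = 0` for `k < 0`. -/
noncomputable def hZ (n : ℕ) (k : ℤ) : MvPolynomial (Fin n) ℚ :=
  if 0 ≤ k then MvPolynomial.hsymm (Fin n) ℚ k.toNat else 0

/-- The Schur polynomial `s_λ(u_1,…,u_n)`, via the Jacobi–Trudi formula
`s_λ = det (h_{λ_i + j - i})`; it vanishes when `λ` has more than `n` parts. -/
noncomputable def schurPoly (n : ℕ) {m : ℕ} (lam : Fin m → ℕ) :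
    MvPolynomial (Fin n) ℚ :=
  Matrix.det (Matrix.of fun i j : Fin m => hZ n ((lam i : ℤ) + (j : ℕ) - (i : ℕ)))

open Finset

namespace PowerSeries

variable {A : Type*} [CommRing A]

theorem derivative_mk_pow (a : A) :
    d⁄dX A (mk fun m => a ^ m) = (mk fun m => a ^ m) * mk fun i => a ^ (i + 1) := by
  ext m
  rw [coeff_derivative, coeff_mul, Nat.sum_antidiagonal_eq_sum_range_succ_mk]
  simp only [coeff_mk, ← pow_add]
  rw [sum_congr rfl fun i hi => by rw [show i + (m - i + 1) = m + 1 by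
    rw [mem_range] at hi; omega], sum_const, card_range, nsmul_eq_mul]
  push_cast
  ring

theorem derivative_prod_of_derivative_eq_mul {ι : Type*} [DecidableEq ι] (s : Finset ι)
    {F G : ι → A⟦X⟧} (h : ∀ i ∈ s, d⁄dX A (F i) = F i * G i) :
    d⁄dX A (∏ i ∈ s, F i) = (∏ i ∈ s, F i) * ∑ i ∈ s, G i := by
  induction s using Finset.induction_on with
  | empty => simp
  | insert j s hj ih =>
    rw [prod_insert hj, sum_insert hj, Derivation.leibniz, h j (mem_insert_self j s),
      ih fun i hi => h i (mem_insert_of_mem hi), smul_eq_mul, smul_eq_mul]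
    ring

variable [Algebra ℚ A] {f : A⟦X⟧}

theorem constantCoeff_exp_subst (hf : constantCoeff f = 0) :
    constantCoeff ((exp A).subst f) = 1 := by
  rw [← coeff_zero_eq_constantCoeff_apply, coeff_subst' (HasSubst.of_constantCoeff_zero' hf),
    finsum_eq_single _ 0 fun d hd => by
      rw [coeff_zero_eq_constantCoeff_apply, map_pow, hf, zero_pow hd, smul_zero]]
  simp

theorem derivative_exp_subst (hf : constantCoeff f = 0) :
    d⁄dX A ((exp A).subst f) = (exp A).subst f * d⁄dX A f := by
  rw [derivative_subst (HasSubst.of_constantCoeff_zero' hf), derivative_exp]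

theorem eq_exp_subst_of_derivative_eq_mul [IsAddTorsionFree A] {Y : A⟦X⟧}
    (hf : constantCoeff f = 0) (hY : constantCoeff Y = 1) (hd : d⁄dX A Y = Y * d⁄dX A f) :
    Y = (exp A).subst f := by
  have hf' : constantCoeff (-f) = 0 := by rw [map_neg, hf, neg_zero]
  have mul_exp_subst_neg : ∀ Z : A⟦X⟧, constantCoeff Z = 1 → d⁄dX A Z = Z * d⁄dX A f →
      Z * (exp A).subst (-f) = 1 := by
    intro Z hZ hdZ
    refine derivative.ext ?_ ?_
    · rw [Derivation.leibniz, derivative_exp_subst hf', hdZ, map_neg, derivative_one,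
        smul_eq_mul, smul_eq_mul]
      ring
    · rw [map_mul, hZ, constantCoeff_exp_subst hf', map_one, one_mul]
  calc Y = Y * ((exp A).subst f * (exp A).subst (-f)) := by
        rw [mul_exp_subst_neg _ (constantCoeff_exp_subst hf) (derivative_exp_subst hf), mul_one]
    _ = (exp A).subst f * (Y * (exp A).subst (-f)) := by ring
    _ = (exp A).subst f := by rw [mul_exp_subst_neg Y hY hd, mul_one]

theorem coeff_exp_subst (hf : constantCoeff f = 0) (k : ℕ) :
    coeff k ((exp A).subst f) = ∑ m ∈ range (k + 1), (m.factorial : ℚ)⁻¹ • coeff k (f ^ m) := by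
  rw [coeff_subst' (HasSubst.of_constantCoeff_zero' hf),
    finsum_eq_sum_of_support_subset _ (s := range (k + 1)) ?_]
  · refine sum_congr rfl fun m _ => ?_
    rw [coeff_exp, smul_eq_mul, ← Algebra.smul_def, one_div]
  · intro m hm
    by_contra hkm
    have hkm : k < m := by simpa using hkm
    refine Function.notMem_support.mpr ?_ hm
    rw [coeff_of_lt_order k ((Nat.cast_lt.mpr hkm).trans_le
      (le_order_pow_of_constantCoeff_eq_zero m hf)), smul_zero]

end PowerSeries

namespace MvPolynomial

variable {σ R : Type*} [Fintype σ] [DecidableEq σ] [CommSemiring R]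

theorem prod_map_X_eq_prod_X_pow_count (s : Multiset σ) :
    (s.map (X : σ → MvPolynomial σ R)).prod = ∏ j, X j ^ s.count j := by
  rw [prod_multiset_map_count]
  exact prod_subset (subset_univ _) fun j _ hj => by
    rw [Multiset.count_eq_zero_of_notMem (by simpa using hj), pow_zero]

theorem hsymm_eq_sum_finsuppAntidiag (k : ℕ) :
    hsymm σ R k = ∑ l ∈ univ.finsuppAntidiag k, ∏ j, X j ^ l j := by
  symm
  refine sum_bij' (fun l hl => ⟨Finsupp.toMultiset l, ?_⟩) (fun s _ => Multiset.toFinsupp s.1)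
    (fun _ _ => mem_univ _) ?_ (fun l _ => Finsupp.toMultiset_toFinsupp l)
    (fun s _ => Subtype.ext (Multiset.toFinsupp_toMultiset s.1)) ?_
  · simpa [Finsupp.sum_fintype] using (mem_finsuppAntidiag.1 hl).1
  · intro s _
    refine mem_finsuppAntidiag.2 ⟨?_, fun j _ => mem_univ j⟩
    rw [sum_congr rfl fun j _ => Multiset.toFinsupp_apply s.1 j,
      Multiset.sum_count_eq_card fun j _ => mem_univ j, s.2]
  · intro l _
    rw [prod_map_X_eq_prod_X_pow_count]
    simp

theorem coeff_prod_mk_X_pow_eq_hsymm (k : ℕ) :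
    PowerSeries.coeff k (∏ j, PowerSeries.mk fun m => (X j : MvPolynomial σ R) ^ m) =
      hsymm σ R k := by
  rw [PowerSeries.coeff_prod, hsymm_eq_sum_finsuppAntidiag]
  simp only [PowerSeries.coeff_mk]

end MvPolynomial

open PowerSeries

theorem constantCoeff_swGen : constantCoeff swGen = 0 := by
  simp [swGen, ← coeff_zero_eq_constantCoeff_apply]

theorem sw_eq_coeff_exp_subst (k : ℕ) :
    sw k = coeff k ((exp (MvPolynomial ℕ ℚ)).subst swGen) :=
  (coeff_exp_subst constantCoeff_swGen k).symm

theorem derivative_map_powerSub_swGen (n : ℕ) :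
    d⁄dX _ (PowerSeries.map (powerSub n : MvPolynomial ℕ ℚ →+* _) swGen) =
      ∑ j, mk fun i => (MvPolynomial.X j : MvPolynomial (Fin n) ℚ) ^ (i + 1) := by
  ext1 i
  rw [coeff_derivative, coeff_map, map_sum]
  simp only [swGen, coeff_mk, if_neg i.succ_ne_zero]
  have hcast : ((i : MvPolynomial (Fin n) ℚ) + 1) = algebraMap ℚ _ ((i + 1 : ℕ) : ℚ) := by simp
  rw [RingHom.coe_coe, powerSub, MvPolynomial.aeval_X, MvPolynomial.psum, hcast, Algebra.smul_def,
    mul_right_comm, ← map_mul, inv_mul_cancel₀ (by positivity), map_one, one_mul]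

theorem map_powerSub_exp_subst_swGen (n : ℕ) :
    PowerSeries.map (powerSub n : MvPolynomial ℕ ℚ →+* _) ((exp (MvPolynomial ℕ ℚ)).subst swGen) =
      ∏ j, mk fun m => (MvPolynomial.X j : MvPolynomial (Fin n) ℚ) ^ m := by
  refine (map_subst (HasSubst.of_constantCoeff_zero' constantCoeff_swGen) _).trans ?_
  change (PowerSeries.map _ (exp _)).subst (PowerSeries.map _ swGen) = _
  rw [map_exp]
  symm
  apply eq_exp_subst_of_derivative_eq_mul
  · rw [← coeff_zero_eq_constantCoeff_apply, coeff_map, coeff_zero_eq_constantCoeff_apply,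
      constantCoeff_swGen, map_zero]
  · simp only [map_prod, ← coeff_zero_eq_constantCoeff_apply, coeff_mk, pow_zero, prod_const_one]
  · rw [derivative_map_powerSub_swGen]
    exact derivative_prod_of_derivative_eq_mul _ fun j _ => derivative_mk_pow _

theorem powerSub_sw (n k : ℕ) : powerSub n (sw k) = MvPolynomial.hsymm (Fin n) ℚ k := by
  rw [sw_eq_coeff_exp_subst, ← AlgHom.coe_toRingHom, ← coeff_map, map_powerSub_exp_subst_swGen,
    MvPolynomial.coeff_prod_mk_X_pow_eq_hsymm]

theorem powerSub_swZ (n : ℕ) (k : ℤ) : powerSub n (swZ k) = hZ n k := by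
  unfold swZ hZ
  split_ifs
  · exact powerSub_sw n k.toNat
  · exact map_zero _

theorem stmt_10_general (n m : ℕ) (lam : Fin m → ℕ) :
    powerSub n (swSchur lam) = schurPoly n lam := by
  rw [swSchur, schurPoly, ← AlgHom.coe_toRingHom, RingHom.map_det]
  congr 1
  exact Matrix.ext fun i j => powerSub_swZ n _

/-- Under `x_i ↦ p_i/i` the Schur–Weierstrass polynomial `σ_λ`
becomes the ordinary Schur polynomial `s_λ(u_1,…,u_n)`. -/
theorem stmt_10 (n m : ℕ) (lam : Fin m → ℕ) (hdec : Antitone lam)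
    (hpos : ∀ i, 0 < lam i) :
    powerSub n (swSchur lam) = schurPoly n lam :=
  stmt_10_general n m lam
end

section
/- Let F be a formal power series in countably many variables x_1, x_2, ... (with each monomial of finite support, graded by weight deg x_i = i, with finitely many monomials in each weight). Then F = 0 if and only if for all sufficiently large n, the substitution x_i ↦ (u_1^i + ... + u_n^i)/i yields the zero power series in u_1,...,u_n. -/
/-- The weight of a monomial in the variables `x_1, x_2, …` (variable index `i`
stands for `x_{i+1}`, of weight `i+1`). -/
def wtMon (d : ℕ →₀ ℕ) : ℕ := d.sum fun i e => (i + 1) * e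

/-- The image of the monomial `∏ x_{i+1}^{d i}` under the substitution
`x_{i+1} ↦ p_{i+1}(u_1,…,u_n)/(i+1)`. -/
noncomputable def subMon (n : ℕ) (d : ℕ →₀ ℕ) : MvPolynomial (Fin n) ℚ :=
  d.prod fun i e =>
    (((i + 1 : ℕ) : ℚ)⁻¹ • ∑ j : Fin n, MvPolynomial.X j ^ (i + 1)) ^ e

/-!
The weight-`m` part of `F` is a polynomial in `x_1, …, x_m`, so for `n ≥ m` its image is that
polynomial evaluated at `p_1/1, …, p_n/n`. These are algebraically independent: by Newton's
identities they generate the elementary symmetric polynomials, over which every `u_i` is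
integral, so `ℚ[u_1, …, u_n]`, of transcendence degree `n`, is algebraic over the algebra
generated by these `n` elements, and they form a transcendence basis.
-/

namespace MvPolynomial

variable {σ R : Type*} [Fintype σ] [CommRing R]

theorem isIntegral_X_of_esymm_mem {S : Subalgebra R (MvPolynomial σ R)}
    (hS : ∀ k ≤ Fintype.card σ, esymm σ R k ∈ S) (i : σ) :
    IsIntegral S (X i : MvPolynomial σ R) := by
  -- `-X i` is a root of `∏ j, (T + X j)`, whose coefficients are the `esymm σ R k`.
  let p : Polynomial (MvPolynomial σ R) := ∏ j, (Polynomial.X + Polynomial.C (X j))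
  have hp_lifts : p ∈ Polynomial.lifts (algebraMap S (MvPolynomial σ R)) := by
    simp only [p, prod_C_add_X_eq_sum_esymm]
    refine Subsemiring.sum_mem _ fun k hk =>
      Subsemiring.mul_mem _ ?_ (Polynomial.X_pow_mem_lifts _ _)
    exact Polynomial.C_mem_lifts _
      (⟨esymm σ R k, hS k (Nat.lt_succ_iff.mp (Finset.mem_range.mp hk))⟩ : S)
  have hp_monic : p.Monic :=
    Polynomial.monic_prod_of_monic _ _ fun j _ => Polynomial.monic_X_add_C _
  obtain ⟨q, hq, -, hq_monic⟩ := Polynomial.lifts_and_natDegree_eq_and_monic hp_lifts hp_monic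
  have hneg : IsIntegral S (-X i : MvPolynomial σ R) := by
    refine ⟨q, hq_monic, ?_⟩
    rw [← Polynomial.eval_map, hq, Polynomial.eval_prod]
    exact Finset.prod_eq_zero (Finset.mem_univ i) (by simp)
  simpa using hneg.neg

theorem algebraIsIntegral_of_esymm_mem {S : Subalgebra R (MvPolynomial σ R)}
    (hS : ∀ k ≤ Fintype.card σ, esymm σ R k ∈ S) : Algebra.IsIntegral S (MvPolynomial σ R) := by
  refine ⟨fun p => p.induction_on (fun r => ?_) (fun p q hp hq => hp.add hq)
    (fun p i hp => hp.mul (isIntegral_X_of_esymm_mem hS i))⟩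
  rw [← algebraMap_eq, IsScalarTower.algebraMap_apply R S]
  exact isIntegral_algebraMap

theorem algebraicIndependent_of_esymm_mem_adjoin [IsDomain R] {y : σ → MvPolynomial σ R}
    (hy : ∀ k ≤ Fintype.card σ, esymm σ R k ∈ Algebra.adjoin R (Set.range y)) :
    AlgebraicIndependent R y := by
  have := algebraIsIntegral_of_esymm_mem hy
  exact (Algebra.IsAlgebraic.isTranscendenceBasis_of_lift_le_trdeg_of_finite R y (by simp)).1

theorem esymm_mem_adjoin_psum {K : Type*} [Field K] [CharZero K] (k : ℕ) :
    esymm σ K k ∈ Algebra.adjoin K (psum σ K '' Set.Icc 1 k) := by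
  induction k using Nat.strong_induction_on with
  | _ k ih =>
    rcases Nat.eq_zero_or_pos k with rfl | hk
    · simp [esymm_zero]
    set S := Algebra.adjoin K (psum σ K '' Set.Icc 1 k)
    have hsign (j : ℕ) : (-1 : MvPolynomial σ K) ^ j ∈ S :=
      Subalgebra.pow_mem _ (Subalgebra.neg_mem _ (Subalgebra.one_mem _)) _
    have hmul : (k : MvPolynomial σ K) * esymm σ K k ∈ S := by
      rw [mul_esymm_eq_sum]
      refine Subalgebra.mul_mem _ (hsign _) (Subalgebra.sum_mem _ fun a ha => ?_)
      simp only [Finset.mem_filter, Finset.HasAntidiagonal.mem_antidiagonal] at ha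
      refine Subalgebra.mul_mem _ (Subalgebra.mul_mem _ (hsign _) ?_) ?_
      · exact Algebra.adjoin_mono (Set.image_mono (Set.Icc_subset_Icc le_rfl (by omega)))
          (ih a.1 ha.2)
      · exact Algebra.subset_adjoin ⟨a.2, ⟨by omega, by omega⟩, rfl⟩
    have hk' : (k : K) ≠ 0 := by exact_mod_cast hk.ne'
    have := Subalgebra.smul_mem _ hmul (k : K)⁻¹
    rwa [← map_natCast (C : K →+* MvPolynomial σ K), smul_eq_C_mul, ← mul_assoc, ← map_mul,
      inv_mul_cancel₀ hk', map_one, one_mul] at this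

end MvPolynomial

open MvPolynomial

theorem mul_apply_le_wtMon (d : ℕ →₀ ℕ) (i : ℕ) : (i + 1) * d i ≤ wtMon d := by
  by_cases h : d i = 0
  · simp [h]
  · exact Finset.single_le_sum (f := fun j => (j + 1) * d j) (fun j _ => Nat.zero_le _)
      (Finsupp.mem_support_iff.mpr h)

theorem apply_eq_zero_of_wtMon_le {d : ℕ →₀ ℕ} {i : ℕ} (h : wtMon d ≤ i) : d i = 0 := by
  have := mul_apply_le_wtMon d i
  by_contra hne
  nlinarith [Nat.one_le_iff_ne_zero.mpr hne]

theorem finite_setOf_wtMon_eq (m : ℕ) : {d : ℕ →₀ ℕ | wtMon d = m}.Finite := by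
  refine (Set.finite_Iic (∑ i ∈ Finset.range m, Finsupp.single i m)).subset
    fun d (hd : wtMon d = m) i => ?_
  rw [Finset.sum_apply']
  by_cases hi : i < m
  · have : d i ≤ m := hd ▸ (Nat.le_mul_of_pos_left _ i.succ_pos).trans (mul_apply_le_wtMon d i)
    simpa [Finsupp.single_apply, hi] using this
  · simp [apply_eq_zero_of_wtMon_le (d := d) (i := i) (by omega)]

section WeightComponent

variable {R : Type*} [CommSemiring R]

noncomputable def weightComponent (F : (ℕ →₀ ℕ) → R) (m : ℕ) : MvPolynomial ℕ R :=
  ∑ d ∈ (finite_setOf_wtMon_eq m).toFinset, monomial d (F d)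

theorem coeff_weightComponent (F : (ℕ →₀ ℕ) → R) (m : ℕ) (d : ℕ →₀ ℕ) :
    coeff d (weightComponent F m) = if wtMon d = m then F d else 0 := by
  simp [weightComponent, coeff_sum, coeff_monomial]

theorem lt_of_mem_vars_weightComponent {F : (ℕ →₀ ℕ) → R} {m i : ℕ}
    (hi : i ∈ (weightComponent F m).vars) : i < m := by
  obtain ⟨d, hd, hid⟩ := (mem_vars_iff_mem_support i).mp hi
  rw [mem_support_iff, coeff_weightComponent] at hd
  have hwt : wtMon d = m := by
    by_contra h
    simp [h] at hd
  by_contra hlt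
  exact Finsupp.mem_support_iff.mp hid (apply_eq_zero_of_wtMon_le (by omega))

end WeightComponent

noncomputable def powerSumSubst (n i : ℕ) : MvPolynomial (Fin n) ℚ :=
  ((i + 1 : ℕ) : ℚ)⁻¹ • psum (Fin n) ℚ (i + 1)

theorem aeval_powerSumSubst_weightComponent (F : (ℕ →₀ ℕ) → ℚ) (n m : ℕ) :
    aeval (powerSumSubst n) (weightComponent F m) =
      ∑ᶠ d ∈ {d : ℕ →₀ ℕ | wtMon d = m}, F d • subMon n d := by
  rw [finsum_mem_eq_finite_toFinset_sum _ (finite_setOf_wtMon_eq m), weightComponent, map_sum]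
  refine Finset.sum_congr rfl fun d _ => ?_
  rw [aeval_monomial, ← Algebra.smul_def]
  rfl

theorem algebraicIndependent_powerSumSubst (n : ℕ) :
    AlgebraicIndependent ℚ fun k : Fin n => powerSumSubst n k := by
  refine algebraicIndependent_of_esymm_mem_adjoin fun k hk => ?_
  refine Algebra.adjoin_le ?_ (esymm_mem_adjoin_psum k)
  rintro _ ⟨j, ⟨hj1, hjk⟩, rfl⟩
  have hj : j - 1 < n := by simp at hk; omega
  have hpsum : psum (Fin n) ℚ j = (j : ℚ) • powerSumSubst n (j - 1) := by
    rw [powerSumSubst, Nat.sub_add_cancel hj1, smul_smul, mul_inv_cancel₀ (by positivity),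
      one_smul]
  rw [SetLike.mem_coe, hpsum]
  exact Subalgebra.smul_mem _ (Algebra.subset_adjoin (Set.mem_range_self (⟨j - 1, hj⟩ : Fin n))) _

theorem eq_zero_of_aeval_powerSumSubst_eq_zero {n : ℕ} {p : MvPolynomial ℕ ℚ}
    (hp : ∀ i ∈ p.vars, i < n) (h : aeval (powerSumSubst n) p = 0) : p = 0 := by
  obtain ⟨q, rfl⟩ := exists_rename_eq_of_vars_subset_range p Fin.val Fin.val_injective
    fun i hi => ⟨⟨i, hp i hi⟩, rfl⟩
  rw [aeval_rename] at h
  rw [(algebraicIndependent_iff_injective_aeval.mp (algebraicIndependent_powerSumSubst n))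
    (h.trans (map_zero _).symm), map_zero]

/-- A formal power series in countably many variables `x_1, x_2, …`
(given by its coefficient function `F` on monomials; each weight has finitely many
monomials) is zero iff for all sufficiently large `n` the substitution
`x_i ↦ (u_1^i + ⋯ + u_n^i)/i` yields the zero power series, i.e. each
weight-`m` piece maps to zero. -/
theorem stmt_12 (F : (ℕ →₀ ℕ) → ℚ) :
    F = 0 ↔ ∃ N : ℕ, ∀ n ≥ N, ∀ m : ℕ,
      (∑ᶠ d ∈ {d : ℕ →₀ ℕ | wtMon d = m}, F d • subMon n d) = 0 := by
  refine ⟨by rintro rfl; exact ⟨0, fun n _ m => by simp⟩, fun ⟨N, hN⟩ => funext fun d => ?_⟩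
  have hcomp : weightComponent F (wtMon d) = 0 := by
    refine eq_zero_of_aeval_powerSumSubst_eq_zero (n := max N (wtMon d))
      (fun i hi => (lt_of_mem_vars_weightComponent hi).trans_le (le_max_right _ _)) ?_
    rw [aeval_powerSumSubst_weightComponent]
    exact hN _ (le_max_left _ _) _
  simpa [coeff_weightComponent] using congrArg (coeff d) hcomp
end

section
/- For a symmetric numerical semigroup S with gap set W = {w_1 < ... < w_δ} and associated partition λ, the Schur-Weierstrass polynomial σ_λ(x) depends only on the variables x_w for w ∈ W, i.e. ∂σ_λ/∂x_h = 0 for every h ∈ S, h ≥ 1. -/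
/-!
Differentiating coefficientwise, `∂/∂x_h` is a derivation of `ℚ[x]⟦t⟧` sending
`g = Σ_{i≥1} x_i t^i` to `t^h`. Since `σ_k` is the `t^k`-coefficient of every truncated exponential
`Σ_{m<N} g^m/m!` with `N > k`, and a derivation `D` maps such a truncation to the next shorter one
times `D g`, this gives `∂σ_k/∂x_h = σ_{k-h}` (with `σ_k = 0` for `k < 0`).

Write `a_i = w_{δ-i} - (δ-1)`, so that `σ_λ = det (σ_{a_i + j})`. By the Leibniz rule for
determinants, `∂σ_λ/∂x_h` is the sum over `i` of the determinants with row `i` replaced by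
`(σ_{a_i - h + j})_j`. If `w_{δ-i} < h` this row is zero. Otherwise `w_{δ-i} - h` is again a gap,
because `h ∈ S` and `S` is closed under addition, so the new row equals another row of the matrix.
-/

open Finset

namespace Derivation

variable {R A M : Type*} [CommSemiring R] [CommSemiring A] [Algebra R A]
  [AddCommMonoid M] [Module A M] [Module R M]

theorem leibniz_finsetProd {ι : Type*} [DecidableEq ι] (D : Derivation R A M) (s : Finset ι)
    (f : ι → A) : D (∏ i ∈ s, f i) = ∑ i ∈ s, (∏ j ∈ s.erase i, f j) • D (f i) := by
  induction s using Finset.induction_on with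
  | empty => simp
  | @insert a s ha ih =>
    rw [prod_insert ha, leibniz, ih, sum_insert ha, erase_insert ha, smul_sum, add_comm]
    congr 1
    refine sum_congr rfl fun i hi => ?_
    rw [erase_insert_of_ne (ne_of_mem_of_not_mem hi ha).symm,
      prod_insert (fun h => ha (mem_of_mem_erase h)), smul_smul]

theorem map_det {R A n : Type*} [CommSemiring R] [CommRing A] [Algebra R A]
    [Fintype n] [DecidableEq n] (D : Derivation R A A) (M : Matrix n n A) :
    D M.det = ∑ i, (M.updateRow i fun j => D (M i j)).det := by
  simp only [Matrix.det_apply, map_sum]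
  rw [sum_comm]
  refine sum_congr rfl fun σ _ => ?_
  rw [Units.smul_def, map_zsmul, leibniz_finsetProd, smul_sum,
    ← Equiv.sum_comp σ fun i => σ.sign • ∏ k, (M.updateRow i fun j => D (M i j)) (σ k) k]
  refine sum_congr rfl fun k _ => ?_
  rw [Units.smul_def, ← mul_prod_erase univ _ (mem_univ k), Matrix.updateRow_self, smul_eq_mul,
    mul_comm]
  congr 2
  refine prod_congr rfl fun j hj => ?_
  rw [Matrix.updateRow_ne (σ.injective.ne (ne_of_mem_erase hj))]

end Derivation

namespace PowerSeries

variable {R A : Type*} [CommSemiring R] [CommRing A] [Algebra R A]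

noncomputable def mapCoeffsDerivation (D : Derivation R A A) : Derivation R A⟦X⟧ A⟦X⟧ :=
  Derivation.mk'
    { toFun := fun f => mk fun n => D (coeff n f)
      map_add' := fun f g => by ext; simp
      map_smul' := fun r f => by ext; simp }
    fun f g => by
      ext n
      simp only [LinearMap.coe_mk, AddHom.coe_mk, coeff_mk, smul_eq_mul, map_add, coeff_mul,
        map_sum, Derivation.leibniz, sum_add_distrib]
      congr 1
      rw [← Nat.sum_antidiagonal_swap]
      simp only [Prod.fst_swap, Prod.snd_swap]

@[simp]
theorem coeff_mapCoeffsDerivation (D : Derivation R A A) (f : A⟦X⟧) (n : ℕ) :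
    coeff n (mapCoeffsDerivation D f) = D (coeff n f) := by
  simp [mapCoeffsDerivation]

end PowerSeries

section TruncExp

variable {B : Type*} [CommRing B] [Algebra ℚ B]

noncomputable def truncExp (N : ℕ) (f : B) : B :=
  ∑ m ∈ range N, (m.factorial : ℚ)⁻¹ • f ^ m

theorem Derivation.map_truncExp_succ (D : Derivation ℚ B B) (N : ℕ) (f : B) :
    D (truncExp (N + 1) f) = truncExp N f * D f := by
  rw [truncExp, sum_range_succ', map_add, truncExp, sum_mul, map_sum]
  simp only [pow_zero, map_smul, Derivation.map_one_eq_zero, smul_zero, add_zero]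
  refine sum_congr rfl fun k _ => ?_
  rw [Derivation.leibniz_pow, add_tsub_cancel_right, ← Nat.cast_smul_eq_nsmul ℚ, smul_smul,
    smul_eq_mul, smul_mul_assoc]
  congr 1
  rw [Nat.factorial_succ]
  push_cast
  field_simp

end TruncExp

theorem StrictMono.val_le_apply {n : ℕ} {f : Fin n → ℕ} (hf : StrictMono f) (i : Fin n) :
    (i : ℕ) ≤ f i := by
  obtain ⟨i, hi⟩ := i
  induction i with
  | zero => exact Nat.zero_le _
  | succ i ih => exact (ih (by omega)).trans_lt (hf (Fin.mk_lt_mk.mpr i.lt_succ_self))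

section SchurWeierstrass

open PowerSeries
open MvPolynomial (pderiv)

theorem coeff_swGen_pow_of_lt {k m : ℕ} (hkm : k < m) : coeff k (swGen ^ m) = 0 := by
  have hX : (X : PowerSeries (MvPolynomial ℕ ℚ)) ∣ swGen := by
    simp [X_dvd_iff, swGen]
  exact X_pow_dvd_iff.mp (pow_dvd_pow_of_dvd hX m) k hkm

theorem coeff_truncExp_swGen {k N : ℕ} (hkN : k < N) : coeff k (truncExp N swGen) = sw k := by
  rw [sw, truncExp, map_sum]
  refine (sum_subset (range_subset_range.mpr hkN) fun m hmN hmk => ?_).symm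
  simp only [mem_range, not_lt] at hmN hmk
  rw [coeff_smul, coeff_swGen_pow_of_lt (by omega), smul_zero]

theorem mapCoeffsDerivation_pderiv_swGen {h : ℕ} (hh : 1 ≤ h) :
    mapCoeffsDerivation (pderiv h) swGen = X ^ h := by
  refine PowerSeries.ext fun n => ?_
  rcases eq_or_ne n h with rfl | hnh
  · simp [swGen, show n ≠ 0 by omega]
  · simp only [coeff_mapCoeffsDerivation, swGen, coeff_mk, coeff_X_pow, if_neg hnh]
    split_ifs <;> simp [MvPolynomial.pderiv_X, hnh]

theorem pderiv_sw {h : ℕ} (hh : 1 ≤ h) (k : ℕ) :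
    pderiv h (sw k) = if h ≤ k then sw (k - h) else 0 := by
  calc pderiv h (sw k)
      = coeff k (mapCoeffsDerivation (pderiv h) (truncExp (k + 1) swGen)) := by
        rw [coeff_mapCoeffsDerivation, coeff_truncExp_swGen k.lt_succ_self]
    _ = coeff k (truncExp k swGen * X ^ h) := by
        rw [Derivation.map_truncExp_succ, mapCoeffsDerivation_pderiv_swGen hh]
    _ = if h ≤ k then sw (k - h) else 0 := by
        rw [coeff_mul_X_pow']
        split_ifs
        · exact coeff_truncExp_swGen (by omega)
        · rfl

theorem pderiv_swZ {h : ℕ} (hh : 1 ≤ h) (k : ℤ) : pderiv h (swZ k) = swZ (k - h) := by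
  unfold swZ
  split_ifs with hk hkh hkh
  · rw [pderiv_sw hh, if_pos (by omega)]
    congr 1
    omega
  · rw [pderiv_sw hh, if_neg (by omega)]
  · omega
  · exact map_zero _

theorem pderiv_det_swZ_eq_zero {n h : ℕ} (hh : 1 ≤ h) (a : Fin n → ℤ)
    (ha : ∀ i, a i + (n - 1 : ℤ) < h ∨ a i - h ∈ Set.range a) :
    pderiv h (Matrix.of fun i j : Fin n => swZ (a i + (j : ℕ))).det = 0 := by
  rw [Derivation.map_det]
  refine sum_eq_zero fun i _ => ?_
  have hrow : (fun j : Fin n => pderiv h (swZ (a i + (j : ℕ)))) =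
      fun j : Fin n => swZ (a i - h + (j : ℕ)) := by
    funext j
    rw [pderiv_swZ hh]
    ring_nf
  simp only [Matrix.of_apply, hrow]
  rcases ha i with hneg | ⟨k, hk⟩
  · refine Matrix.det_eq_zero_of_row_eq_zero i fun j => ?_
    rw [Matrix.updateRow_self, swZ, if_neg]
    have := j.isLt
    omega
  · have hki : k ≠ i := by
      rintro rfl
      omega
    refine Matrix.det_zero_of_row_eq hki.symm ?_
    funext j
    rw [Matrix.updateRow_self, Matrix.updateRow_ne hki, Matrix.of_apply, hk]

end SchurWeierstrass

theorem stmt_16_general (S : Set ℕ)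
    (hadd : ∀ a ∈ S, ∀ b ∈ S, a + b ∈ S)
    (δ : ℕ)
    (w : Fin δ → ℕ) (hmono : StrictMono w) (hrange : Set.range w = Sᶜ)
    (lam : Fin δ → ℕ)
    (hlam : ∀ i : Fin δ, lam i = w i.rev - ((δ - 1) - (i : ℕ))) :
    ∀ h ∈ S, 1 ≤ h → MvPolynomial.pderiv h (swSchur lam) = 0 := by
  intro h hS hh
  have hschur : swSchur lam =
      (Matrix.of fun i j : Fin δ => swZ ((w i.rev : ℤ) - (δ - 1) + (j : ℕ))).det := by
    refine congrArg Matrix.det (Matrix.ext fun i j => congrArg swZ ?_)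
    -- `w k ≥ k`, so the natural subtraction in `hlam` does not truncate
    have := hmono.val_le_apply i.rev
    have := Fin.val_rev i
    have := i.isLt
    rw [hlam]
    omega
  rw [hschur]
  refine pderiv_det_swZ_eq_zero hh _ fun i => ?_
  rcases lt_or_ge (w i.rev) h with hlt | hle
  · left
    omega
  · right
    have hgap : w i.rev ∈ Sᶜ := hrange ▸ ⟨i.rev, rfl⟩
    have hgap' : w i.rev - h ∈ Sᶜ := fun hmem =>
      hgap (Nat.sub_add_cancel hle ▸ hadd _ hmem _ hS)
    obtain ⟨k, hk⟩ := hrange ▸ hgap'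
    exact ⟨k.rev, by simp only [Fin.rev_rev, hk]; omega⟩

/-- For a symmetric numerical semigroup `S` with gaps `w_1 < ⋯ < w_δ`
and associated partition `λ`, the Schur–Weierstrass polynomial `σ_λ` depends only
on the variables `x_w` for gaps `w`: its partial derivative with respect to `x_h`
vanishes for every nonzero `h ∈ S`. -/
theorem stmt_16 (S : Set ℕ) (h0 : 0 ∈ S)
    (hadd : ∀ a ∈ S, ∀ b ∈ S, a + b ∈ S)
    (hfin : Sᶜ.Finite) (δ : ℕ) (hδ : δ = hfin.toFinset.card)
    (hsym : ∀ w : ℕ, (w ∉ S ↔ (2 * (δ : ℤ) - 1 - w) ∈ ((fun k : ℕ => (k : ℤ)) '' S)))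
    (w : Fin δ → ℕ) (hmono : StrictMono w) (hrange : Set.range w = Sᶜ)
    (lam : Fin δ → ℕ)
    (hlam : ∀ i : Fin δ, lam i = w i.rev - ((δ - 1) - (i : ℕ))) :
    ∀ h ∈ S, 1 ≤ h → MvPolynomial.pderiv h (swSchur lam) = 0 :=
  stmt_16_general S hadd δ w hmono hrange lam hlam
end
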